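/- Let N and m be positive natural numbers. Let p_1, ..., p_S be natural numbers with each p_i ∈ {0, 1, ..., m−1}, and suppose 2^{p_1} + 2^{p_2} + ... + 2^{p_S} = N·2^m. Then the N × 2^m grid can be tiled by horizontal strips of these widths: there exist natural numbers r_1, ..., r_S < N and c_1, ..., c_S such that the strips T_i = {(r_i, y) : c_i ≤ y < c_i + 2^{p_i}} are contained in {0,...,N−1} × {0,...,2^m−1}, are pairwise disjoint, and their union is all of {0,...,N−1} × {0,...,2^m−1}. -/

import Mathlib

/-!
Sort the widths in decreasing order and lay the strips end to end along the row-major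
enumeration `t ↦ (t / 2^m, t % 2^m)` of the mesh. Each strip then starts at a sum of larger
powers of two, hence at a multiple of its own width; since that width also divides the row
length `2^m`, the strip never crosses a row boundary. The strips are disjoint segments of total
length `N * 2^m`, so they cover the mesh.
-/

/-- The horizontal strip of width `w` placed at row `r`, starting column `c`:
`{(r, y) : c ≤ y < c + w}`. -/
def strip (r c w : ℕ) : Set (ℕ × ℕ) :=
  {q | q.1 = r ∧ c ≤ q.2 ∧ q.2 < c + w}

/-- The full `(N, M)` cluster mesh `{0,...,N−1} × {0,...,M−1}`. -/
def fullMesh (N M : ℕ) : Set (ℕ × ℕ) :=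
  {q | q.1 < N ∧ q.2 < M}

open Set Function

def rowMajor (M t : ℕ) : ℕ × ℕ := (t / M, t % M)

lemma rowMajor_injective (M : ℕ) : Injective (rowMajor M) := fun a b h => by
  simp only [rowMajor, Prod.mk.injEq] at h
  rw [← Nat.div_add_mod a M, h.1, h.2, Nat.div_add_mod]

lemma rowMajor_mul_add {M b : ℕ} (a : ℕ) (hb : b < M) : rowMajor M (a * M + b) = (a, b) := by
  have hM : 0 < M := by omega
  simp [rowMajor, Nat.add_mod, Nat.mod_eq_of_lt hb, Nat.add_div_of_dvd_right, hM,
    Nat.div_eq_of_lt hb]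

lemma image_rowMajor_Iio (N M : ℕ) : rowMajor M '' Iio (N * M) = fullMesh N M := by
  ext ⟨a, b⟩
  constructor
  · rintro ⟨t, ht, he⟩
    have hM : 0 < M := Nat.pos_of_mul_pos_left (Nat.zero_lt_of_lt ht)
    simp only [rowMajor, Prod.mk.injEq] at he
    rw [← he.1, ← he.2]
    exact ⟨Nat.div_lt_of_lt_mul (by rwa [mul_comm]), Nat.mod_lt t hM⟩
  · rintro ⟨ha, hb⟩
    refine ⟨a * M + b, ?_, rowMajor_mul_add a hb⟩
    have : (a + 1) * M ≤ N * M := Nat.mul_le_mul_right M ha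
    simp only [mem_Iio]
    nlinarith

lemma image_rowMajor_Ico {M o w : ℕ} (h : o % M + w ≤ M) :
    rowMajor M '' Ico o (o + w) = strip (o / M) (o % M) w := by
  have ho := Nat.div_add_mod' o M
  ext ⟨a, b⟩
  constructor
  · rintro ⟨t, ⟨hot, hto⟩, he⟩
    rw [← he]
    have ht : t = o / M * M + (o % M + (t - o)) := by omega
    rw [ht, rowMajor_mul_add _ (by omega)]
    exact ⟨rfl, by omega, by omega⟩
  · rintro ⟨rfl, hb, hbw⟩
    exact ⟨o / M * M + b, ⟨by omega, by omega⟩, rowMajor_mul_add _ (by omega)⟩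

lemma mod_add_le_of_dvd {M o w : ℕ} (hM : 0 < M) (hwM : w ∣ M) (hwo : w ∣ o) :
    o % M + w ≤ M := by
  obtain ⟨k, hk⟩ := (Nat.dvd_mod_iff hwM).2 hwo
  obtain ⟨l, rfl⟩ := hwM
  have hlt : w * k < w * l := hk ▸ Nat.mod_lt o hM
  rw [hk, ← mul_add_one]
  exact Nat.mul_le_mul_left w (Nat.lt_of_mul_lt_mul_left hlt)

section Offset

variable {ι α : Type*} [Fintype ι] [LinearOrder α] (key : ι → α) (w : ι → ℕ)

def offset (i : ι) : ℕ := ∑ j with key j < key i, w j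

lemma offset_add_le_offset {i j : ι} (h : key i < key j) :
    offset key w i + w i ≤ offset key w j := by
  classical
  unfold offset
  rw [add_comm, ← Finset.sum_insert (by simp)]
  refine Finset.sum_le_sum_of_subset fun k hk => ?_
  rcases Finset.mem_insert.1 hk with rfl | hk
  · simpa using h
  · simp only [Finset.mem_filter] at hk ⊢
    exact ⟨hk.1, hk.2.trans h⟩

lemma offset_add_le_sum (i : ι) : offset key w i + w i ≤ ∑ j, w j := by
  classical
  unfold offset
  rw [add_comm, ← Finset.sum_insert (by simp)]
  exact Finset.sum_le_sum_of_subset (Finset.subset_univ _)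

lemma dvd_offset {i : ι} (h : ∀ j, key j < key i → w i ∣ w j) : w i ∣ offset key w i :=
  Finset.dvd_sum fun j hj => h j (Finset.mem_filter.1 hj).2

variable {key}

lemma pairwise_disjoint_Ico_offset (hkey : Injective key) :
    Pairwise (Disjoint on fun i => Ico (offset key w i) (offset key w i + w i)) := by
  intro i j hij
  refine disjoint_left.2 fun t hti htj => ?_
  simp only [mem_Ico] at hti htj
  rcases lt_or_gt_of_ne (hkey.ne hij) with h | h
  · have := offset_add_le_offset key w h
    omega
  · have := offset_add_le_offset key w h
    omega

lemma iUnion_Ico_offset (hkey : Injective key) :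
    ⋃ i, Ico (offset key w i) (offset key w i + w i) = Iio (∑ j, w j) := by
  classical
  have hfin : Finset.univ.biUnion (fun i => Finset.Ico (offset key w i) (offset key w i + w i))
      = Finset.range (∑ j, w j) := by
    refine Finset.eq_of_subset_of_card_le ?_ ?_
    · exact Finset.biUnion_subset.2 fun i _ => fun t ht => by
        have := offset_add_le_sum key w i
        simp only [Finset.mem_Ico, Finset.mem_range] at ht ⊢
        omega
    · rw [Finset.card_biUnion, Finset.card_range]
      · simp
      · intro i _ j _ hij
        simpa [Function.onFun, ← Finset.disjoint_coe] using pairwise_disjoint_Ico_offset w hkey hij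
  rw [← Finset.coe_range, ← hfin]
  simp

end Offset

theorem exists_strip_tiling {ι α : Type*} [Fintype ι] [LinearOrder α] {key : ι → α}
    (hkey : Injective key) {w : ι → ℕ} {N M : ℕ} (hM : 0 < M) (hw : ∀ i, 0 < w i)
    (hwM : ∀ i, w i ∣ M) (hdvd : ∀ i j, key j < key i → w i ∣ w j)
    (hsum : ∑ i, w i = N * M) :
    ∃ r c : ι → ℕ,
      (∀ i, r i < N) ∧
      (∀ i, strip (r i) (c i) (w i) ⊆ fullMesh N M) ∧
      (∀ i j, i ≠ j → Disjoint (strip (r i) (c i) (w i)) (strip (r j) (c j) (w j))) ∧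
      (⋃ i, strip (r i) (c i) (w i)) = fullMesh N M := by
  have hstrip : ∀ i, strip (offset key w i / M) (offset key w i % M) (w i) =
      rowMajor M '' Ico (offset key w i) (offset key w i + w i) := fun i =>
    (image_rowMajor_Ico (mod_add_le_of_dvd hM (hwM i) (dvd_offset key w (hdvd i)))).symm
  have hmesh : fullMesh N M = rowMajor M '' Iio (∑ i, w i) := by
    rw [hsum, image_rowMajor_Iio]
  have hsub : ∀ i, strip (offset key w i / M) (offset key w i % M) (w i) ⊆ fullMesh N M := by
    intro i
    rw [hstrip, hmesh]
    exact image_mono (Ico_subset_Iio_self.trans (Iio_subset_Iio (offset_add_le_sum key w i)))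
  refine ⟨fun i => offset key w i / M, fun i => offset key w i % M, fun i => ?_, hsub,
    fun i j hij => ?_, ?_⟩
  · have hcorner : (offset key w i / M, offset key w i % M) ∈
        strip (offset key w i / M) (offset key w i % M) (w i) :=
      ⟨rfl, le_rfl, Nat.lt_add_of_pos_right (hw i)⟩
    exact (hsub i hcorner).1
  · rw [hstrip, hstrip, disjoint_image_iff (rowMajor_injective M)]
    exact pairwise_disjoint_Ico_offset w hkey hij
  · simp only [hstrip, ← image_iUnion, iUnion_Ico_offset w hkey, hmesh]

theorem strip_covering_general (N m S : ℕ)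
    (p : Fin S → ℕ) (hp : ∀ i, p i ≤ m - 1)
    (hsum : ∑ i, 2 ^ p i = N * 2 ^ m) :
    ∃ r c : Fin S → ℕ,
      (∀ i, r i < N) ∧
      (∀ i, strip (r i) (c i) (2 ^ p i) ⊆ fullMesh N (2 ^ m)) ∧
      (∀ i j, i ≠ j →
        Disjoint (strip (r i) (c i) (2 ^ p i)) (strip (r j) (c j) (2 ^ p j))) ∧
      (⋃ i, strip (r i) (c i) (2 ^ p i)) = fullMesh N (2 ^ m) := by
  -- wider strips are placed first, ties broken by index
  let key : Fin S → ℕᵒᵈ ×ₗ Fin S := fun i => toLex (OrderDual.toDual (p i), i)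
  have hkey : Injective key := fun i j h => congrArg (fun x => (ofLex x).2) h
  have hdvd : ∀ i j, key j < key i → 2 ^ p i ∣ 2 ^ p j := by
    intro i j h
    refine pow_dvd_pow 2 ?_
    rcases Prod.Lex.toLex_lt_toLex.1 h with h | ⟨h, -⟩
    · exact (OrderDual.toDual_lt_toDual.1 h).le
    · exact (OrderDual.toDual_inj.1 h).ge
  exact exists_strip_tiling hkey (by positivity) (fun i => by positivity)
    (fun i => pow_dvd_pow 2 (by have := hp i; omega)) hdvd hsum

theorem strip_covering (N m S : ℕ) (hN : 0 < N) (hm : 0 < m)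
    (p : Fin S → ℕ) (hp : ∀ i, p i ≤ m - 1)
    (hsum : ∑ i, 2 ^ p i = N * 2 ^ m) :
    ∃ r c : Fin S → ℕ,
      (∀ i, r i < N) ∧
      (∀ i, strip (r i) (c i) (2 ^ p i) ⊆ fullMesh N (2 ^ m)) ∧
      (∀ i j, i ≠ j →
        Disjoint (strip (r i) (c i) (2 ^ p i)) (strip (r j) (c j) (2 ^ p j))) ∧
      (⋃ i, strip (r i) (c i) (2 ^ p i)) = fullMesh N (2 ^ m) :=
  strip_covering_general N m S p hp hsum
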